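/- Let p be a prime, s a positive integer, and d an integer with digits_p(s) ≤ d < s and d ≡ s (mod p-1). Then there is a composition of s into d+1 positive parts whose multinomial coefficient has p-adic valuation exactly ⌈(d+1-digits_p(s))/(p-1)⌉, and no composition of s into d+1 parts has smaller p-adic valuation of its multinomial coefficient. -/

import Mathlib

/-- The sum of the digits of `n` in base `p`. -/
def digitSum (p n : ℕ) : ℕ := (Nat.digits p n).sum

/-- The multinomial coefficient `s!/(λ₁!⋯λₙ!)` associated to a list `l = [λ₁,…,λₙ]`. -/
def listMultinomial (l : List ℕ) : ℕ :=
  Nat.factorial l.sum / (l.map Nat.factorial).prod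

/-!
By Legendre's formula, `(p - 1) · v_p(s! / ∏ λᵢ!) = ∑ digits_p(λᵢ) - digits_p(s)`. Every positive
part has digit sum at least `1`, which gives the lower bound. Conversely, write
`d = digits_p(s) + (p - 1) t`. Starting from the base-`p` expansion of `s`, splitting a part
`p^(j+1)` into `p` copies of `p^j` writes `s` as a sum of `d` powers of `p`; splitting one more
`p^(j+1)` into `p^j + (p - 1) p^j` gives `d + 1` parts of total digit sum `d + p - 1`, whose
multinomial coefficient has valuation `t + 1 = ⌈(d + 1 - digits_p(s)) / (p - 1)⌉`.
-/

open Nat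

lemma digitSum_pos {p n : ℕ} (hn : n ≠ 0) : 0 < digitSum p n :=
  List.sum_pos_iff_exists_pos_nat.mpr ⟨_, List.getLast_mem (digits_ne_nil_iff_ne_zero.mpr hn),
    Nat.pos_of_ne_zero (getLast_digit_ne_zero p hn)⟩

lemma digitSum_pow_mul {p c : ℕ} (hc : c ≠ 0) (hcp : c < p) (i : ℕ) :
    digitSum p (p ^ i * c) = c := by
  simp [digitSum, digits_base_pow_mul (by omega : 1 < p) (Nat.pos_of_ne_zero hc),
    digits_of_lt p c hc hcp]

lemma digitSum_pow {p : ℕ} (hp : 1 < p) (i : ℕ) : digitSum p (p ^ i) = 1 := by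
  simpa using digitSum_pow_mul one_ne_zero hp i

lemma sub_one_mul_padicValNat_factorial_add_digitSum (p : ℕ) [Fact p.Prime] (n : ℕ) :
    (p - 1) * padicValNat p n ! + digitSum p n = n := by
  rw [sub_one_mul_padicValNat_factorial]
  exact Nat.sub_add_cancel (digit_sum_le p n)

lemma List.prod_map_factorial_dvd_factorial_sum (l : List ℕ) : (l.map (·!)).prod ∣ l.sum ! := by
  induction l with
  | nil => simp
  | cons a l ih =>
    simpa using (mul_dvd_mul_left a ! ih).trans (factorial_mul_factorial_dvd_factorial_add a l.sum)

lemma List.prod_map_factorial_ne_zero (l : List ℕ) : (l.map (·!)).prod ≠ 0 :=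
  List.prod_ne_zero (by simp [factorial_ne_zero])

lemma sub_one_mul_padicValNat_prod_map_factorial_add_digitSum (p : ℕ) [Fact p.Prime] (l : List ℕ) :
    (p - 1) * padicValNat p (l.map (·!)).prod + (l.map (digitSum p)).sum = l.sum := by
  induction l with
  | nil => simp
  | cons a l ih =>
    have ha := sub_one_mul_padicValNat_factorial_add_digitSum p a
    simp only [List.map_cons, List.prod_cons, List.sum_cons]
    rw [padicValNat.mul (factorial_ne_zero a) l.prod_map_factorial_ne_zero, mul_add]
    omega

lemma sub_one_mul_padicValNat_listMultinomial_add_digitSum (p : ℕ) [Fact p.Prime]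
    (l : List ℕ) :
    (p - 1) * padicValNat p (listMultinomial l) + digitSum p l.sum =
      (l.map (digitSum p)).sum := by
  have hspec : (l.map (·!)).prod * listMultinomial l = l.sum ! :=
    Nat.mul_div_cancel' l.prod_map_factorial_dvd_factorial_sum
  have hmult : listMultinomial l ≠ 0 := by
    rintro h
    rw [h, mul_zero] at hspec
    exact factorial_ne_zero _ hspec.symm
  have hv := congrArg (padicValNat p) hspec
  rw [padicValNat.mul l.prod_map_factorial_ne_zero hmult] at hv
  have hprod := sub_one_mul_padicValNat_prod_map_factorial_add_digitSum p l
  have hsum := sub_one_mul_padicValNat_factorial_add_digitSum p l.sum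
  rw [← hv, mul_add] at hsum
  omega

lemma exists_eq_digitSum_add_sub_one_mul (p : ℕ) [Fact p.Prime] {n d : ℕ}
    (hd : digitSum p n ≤ d) (hmod : d ≡ n [MOD p - 1]) : ∃ t, d = digitSum p n + (p - 1) * t := by
  have hlegendre := sub_one_mul_padicValNat_factorial_add_digitSum p n
  have hn : digitSum p n ≡ n [MOD p - 1] :=
    (Nat.modEq_iff_dvd' (by omega)).2 ⟨padicValNat p n !, by omega⟩
  obtain ⟨t, ht⟩ := (Nat.modEq_iff_dvd' hd).1 (hn.trans hmod.symm)
  exact ⟨t, by omega⟩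

lemma length_le_sum_map_digitSum (p : ℕ) {l : List ℕ} (hl : ∀ x ∈ l, 0 < x) :
    l.length ≤ (l.map (digitSum p)).sum := by
  simpa using List.length_le_sum_of_one_le (l.map (digitSum p)) fun _ hx => by
    obtain ⟨y, hy, rfl⟩ := List.mem_map.1 hx
    exact digitSum_pos (hl y hy).ne'

lemma sum_map_digitSum_of_forall_pow {p : ℕ} (hp : 1 < p) {l : List ℕ}
    (hl : ∀ x ∈ l, ∃ j, p ^ j = x) : (l.map (digitSum p)).sum = l.length := by
  rw [List.map_congr_left (g := fun _ => 1)]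
  · simp
  · intro x hx
    obtain ⟨j, rfl⟩ := hl x hx
    exact digitSum_pow hp j

lemma exists_pow_list_ofDigits (p : ℕ) (L : List ℕ) :
    ∃ l : List ℕ, (∀ x ∈ l, ∃ j, p ^ j = x) ∧ l.length = L.sum ∧ l.sum = ofDigits p L := by
  induction L with
  | nil => exact ⟨[], by simp⟩
  | cons c L ih =>
    obtain ⟨l, hpow, hlen, hsum⟩ := ih
    refine ⟨List.replicate c 1 ++ l.map (p * ·), ?_, ?_, ?_⟩
    · simp only [List.mem_append, List.mem_replicate, List.mem_map]
      rintro x (⟨-, rfl⟩ | ⟨y, hy, rfl⟩)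
      · exact ⟨0, pow_zero p⟩
      · obtain ⟨j, rfl⟩ := hpow y hy
        exact ⟨j + 1, pow_succ' p j⟩
    · simp [hlen]
    · rw [List.sum_append, List.sum_map_mul_left, List.map_id', hsum]
      simp [ofDigits_cons]

lemma exists_pow_succ_mem {p : ℕ} {l : List ℕ} (hl : ∀ x ∈ l, ∃ j, p ^ j = x)
    (h : l.length < l.sum) : ∃ j, p ^ (j + 1) ∈ l := by
  by_contra! hne
  have hle : ∀ x ∈ l, x ≤ 1 := by
    intro x hx
    obtain ⟨_ | j, rfl⟩ := hl x hx
    · simp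
    · exact absurd hx (hne j)
  have := List.sum_le_card_nsmul l 1 hle
  simp only [smul_eq_mul, mul_one] at this
  omega

lemma exists_pow_list_length_add_sub_one {p : ℕ} (hp : 0 < p) {l : List ℕ}
    (hl : ∀ x ∈ l, ∃ j, p ^ j = x) (h : l.length < l.sum) :
    ∃ l' : List ℕ, (∀ x ∈ l', ∃ j, p ^ j = x) ∧ l'.length = l.length + (p - 1) ∧
      l'.sum = l.sum := by
  obtain ⟨j, hj⟩ := exists_pow_succ_mem hl h
  obtain ⟨l₁, l₂, rfl⟩ := List.append_of_mem hj
  refine ⟨l₁ ++ List.replicate p (p ^ j) ++ l₂, ?_, ?_, ?_⟩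
  · simp only [List.mem_append, List.mem_replicate]
    rintro x ((hx | ⟨-, rfl⟩) | hx)
    · exact hl x (by simp [hx])
    · exact ⟨j, rfl⟩
    · exact hl x (by simp [hx])
  · simp only [List.append_assoc, List.length_append, List.length_replicate, List.length_cons]
    omega
  · simp [pow_succ']

lemma exists_pow_list_length {p : ℕ} (hp : 1 < p) (m t : ℕ)
    (h : digitSum p m + (p - 1) * t ≤ m) :
    ∃ l : List ℕ, (∀ x ∈ l, ∃ j, p ^ j = x) ∧ l.length = digitSum p m + (p - 1) * t ∧
      l.sum = m := by
  induction t with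
  | zero => simpa [digitSum, ofDigits_digits] using exists_pow_list_ofDigits p (digits p m)
  | succ t ih =>
    obtain ⟨l, hpow, hlen, hsum⟩ := ih (by rw [Nat.mul_add_one] at h; omega)
    obtain ⟨l', hpow', hlen', hsum'⟩ :=
      exists_pow_list_length_add_sub_one (by omega) hpow (by rw [Nat.mul_add_one] at h; omega)
    exact ⟨l', hpow', by rw [hlen', hlen, Nat.mul_add_one, add_assoc], hsum'.trans hsum⟩

lemma exists_composition_of_pow_list {p : ℕ} (hp : 1 < p) {l : List ℕ}
    (hl : ∀ x ∈ l, ∃ j, p ^ j = x) (h : l.length < l.sum) :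
    ∃ l' : List ℕ, (∀ x ∈ l', 0 < x) ∧ l'.length = l.length + 1 ∧ l'.sum = l.sum ∧
      (l'.map (digitSum p)).sum = l.length + (p - 1) := by
  obtain ⟨j, hj⟩ := exists_pow_succ_mem hl h
  obtain ⟨l₁, l₂, rfl⟩ := List.append_of_mem hj
  have hl₁ : ∀ x ∈ l₁, ∃ j, p ^ j = x := fun x hx => hl x (by simp [hx])
  have hl₂ : ∀ x ∈ l₂, ∃ j, p ^ j = x := fun x hx => hl x (by simp [hx])
  refine ⟨l₁ ++ p ^ j :: p ^ j * (p - 1) :: l₂, ?_, ?_, ?_, ?_⟩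
  · simp only [List.mem_append, List.mem_cons]
    rintro x (hx | rfl | rfl | hx)
    · obtain ⟨i, rfl⟩ := hl₁ x hx
      positivity
    · positivity
    · exact Nat.mul_pos (by positivity) (by omega)
    · obtain ⟨i, rfl⟩ := hl₂ x hx
      positivity
  · simp only [List.length_append, List.length_cons]
    omega
  · have hsplit : p ^ j + p ^ j * (p - 1) = p ^ (j + 1) := by
      rw [pow_succ, add_comm, ← Nat.mul_add_one, Nat.sub_add_cancel hp.le]
    simp [← hsplit, add_assoc]
  · simp [sum_map_digitSum_of_forall_pow hp hl₁, sum_map_digitSum_of_forall_pow hp hl₂,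
      digitSum_pow hp, digitSum_pow_mul (p := p) (by omega : p - 1 ≠ 0) (by omega)]
    omega

lemma Int.ceil_mul_add_one_div {K : Type*} [Field K] [LinearOrder K] [IsStrictOrderedRing K]
    [FloorRing K] {q : K} (hq : 1 ≤ q) (t : ℤ) : ⌈(q * t + 1) / q⌉ = t + 1 := by
  have hq0 : 0 < q := zero_lt_one.trans_le hq
  rw [Int.ceil_eq_iff, add_div, mul_div_cancel_left₀ _ hq0.ne']
  push_cast
  constructor
  · simpa using hq0
  · simpa using (div_le_one hq0).2 hq

theorem exists_composition_min_valuation_general (p s d : ℕ) (hp : Nat.Prime p)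
    (hd : digitSum p s ≤ d) (hds : d < s) (hmod : d ≡ s [MOD p - 1]) :
    (∃ l : List ℕ, l.length = d + 1 ∧ (∀ x ∈ l, 0 < x) ∧ l.sum = s ∧
      (padicValNat p (listMultinomial l) : ℤ) =
        ⌈((d : ℚ) + 1 - (digitSum p s : ℚ)) / ((p : ℚ) - 1)⌉) ∧
    (∀ l : List ℕ, l.length = d + 1 → (∀ x ∈ l, 0 < x) → l.sum = s →
      ⌈((d : ℚ) + 1 - (digitSum p s : ℚ)) / ((p : ℚ) - 1)⌉ ≤
        (padicValNat p (listMultinomial l) : ℤ)) := by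
  have := Fact.mk hp
  obtain ⟨t, rfl⟩ := exists_eq_digitSum_add_sub_one_mul p hd hmod
  have hceil : ⌈(((digitSum p s + (p - 1) * t : ℕ) : ℚ) + 1 - digitSum p s) / ((p : ℚ) - 1)⌉
      = t + 1 := by
    have hp1 : (1 : ℚ) ≤ p - 1 := by
      rw [le_sub_iff_add_le]
      exact_mod_cast hp.two_le
    rw [← Int.ceil_mul_add_one_div hp1 t]
    push_cast [Nat.cast_sub hp.one_le]
    ring_nf
  have hval (l : List ℕ) (hl : l.sum = s) :
      (p - 1) * padicValNat p (listMultinomial l) + digitSum p s = (l.map (digitSum p)).sum :=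
    hl ▸ sub_one_mul_padicValNat_listMultinomial_add_digitSum p l
  rw [hceil]
  refine ⟨?_, fun l hlen hpos hsum => ?_⟩
  · obtain ⟨l₀, hpow, hlen₀, hsum₀⟩ := exists_pow_list_length hp.one_lt s t (by omega)
    obtain ⟨l, hpos, hlen, hsum, hdig⟩ := exists_composition_of_pow_list hp.one_lt hpow (by omega)
    refine ⟨l, by omega, hpos, by omega, ?_⟩
    have h := hval l (by omega)
    rw [hdig, hlen₀, add_assoc, ← Nat.mul_add_one, add_comm] at h
    exact_mod_cast Nat.eq_of_mul_eq_mul_left (Nat.sub_pos_of_lt hp.one_lt) (Nat.add_left_cancel h)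
  · have h := hval l hsum
    have := length_le_sum_map_digitSum p hpos
    exact_mod_cast Nat.lt_of_mul_lt_mul_left (a := p - 1) (by omega)

/-- For `digits_p(s) ≤ d < s` with `d ≡ s (mod p-1)`, there is a composition of `s` into
`d+1` positive parts whose multinomial coefficient has `p`-adic valuation exactly
`⌈(d+1-digits_p(s))/(p-1)⌉`, and no composition of `s` into `d+1` positive parts has a
multinomial coefficient of smaller `p`-adic valuation. -/
theorem exists_composition_min_valuation (p s d : ℕ) (hp : Nat.Prime p) (hs : 0 < s)
    (hd : digitSum p s ≤ d) (hds : d < s) (hmod : d ≡ s [MOD p - 1]) :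
    (∃ l : List ℕ, l.length = d + 1 ∧ (∀ x ∈ l, 0 < x) ∧ l.sum = s ∧
      (padicValNat p (listMultinomial l) : ℤ) =
        ⌈((d : ℚ) + 1 - (digitSum p s : ℚ)) / ((p : ℚ) - 1)⌉) ∧
    (∀ l : List ℕ, l.length = d + 1 → (∀ x ∈ l, 0 < x) → l.sum = s →
      ⌈((d : ℚ) + 1 - (digitSum p s : ℚ)) / ((p : ℚ) - 1)⌉ ≤
        (padicValNat p (listMultinomial l) : ℤ)) :=
  exists_composition_min_valuation_general p s d hp hd hds hmod
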